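/- A DFA A is completely reachable if and only if the iteratively constructed graph Γ(A) is strongly connected. -/

import Mathlib

/-!
Framework: complete deterministic finite automata, reachability of subsets,
defect/excluded/duplicate states of words, and the layered graphs
`Γ₁(A), Γ₂(A), …` of Bondar & Volkov, "A Characterization of Completely
Reachable Automata".
-/

/-- The action of a word on a state: `q · w`. -/
def actWord {Q σ : Type*} (δ : Q → σ → Q) (w : List σ) (q : Q) : Q :=
  w.foldl δ q

/-- The image of a set of states under a word: `P · w`. -/
def actSet {Q σ : Type*} (δ : Q → σ → Q) (w : List σ) (P : Set Q) : Set Q :=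
  actWord δ w '' P

/-- The set `excl(w) = Q \ Q·w` of excluded states of the word `w`. -/
def excl {Q σ : Type*} (δ : Q → σ → Q) (w : List σ) : Set Q :=
  Set.univ \ actSet δ w Set.univ

/-- The defect of the word `w`, i.e. `|Q \ Q·w|`. -/
noncomputable def defect {Q σ : Type*} (δ : Q → σ → Q) (w : List σ) : ℕ :=
  (excl δ w).ncard

/-- The set `dupl(w)` of duplicate states of the word `w`. -/
def dupl {Q σ : Type*} (δ : Q → σ → Q) (w : List σ) : Set Q :=
  {p | ∃ q₁ q₂ : Q, q₁ ≠ q₂ ∧ actWord δ w q₁ = p ∧ actWord δ w q₂ = p}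

/-- A subset `P ⊆ Q` is reachable if `P = Q·w` for some word `w`. -/
def reachableSubset {Q σ : Type*} (δ : Q → σ → Q) (P : Set Q) : Prop :=
  ∃ w : List σ, actSet δ w Set.univ = P

/-- A DFA is completely reachable if every nonempty subset of states is reachable. -/
def completelyReachable {Q σ : Type*} (δ : Q → σ → Q) : Prop :=
  ∀ P : Set Q, P.Nonempty → reachableSubset δ P

/-- A directed graph given by a vertex set and an edge relation. -/
structure DGraph (V : Type*) where
  verts : Set V
  edge : V → V → Prop

/-- Reachability by a directed path in a graph. -/
def GReach {V : Type*} (G : DGraph V) : V → V → Prop :=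
  Relation.ReflTransGen G.edge

/-- A graph is strongly connected if each of its vertices is reachable from
any other one. -/
def StronglyConnected {V : Type*} (G : DGraph V) : Prop :=
  ∀ u ∈ G.verts, ∀ v ∈ G.verts, GReach G u v

/-- The strongly connected component of the vertex `v`: all vertices mutually
reachable with `v`. -/
def scc {V : Type*} (G : DGraph V) (v : V) : Set V :=
  {u | u ∈ G.verts ∧ GReach G u v ∧ GReach G v u}

/-- Vertices of the layered graphs: states (`Sum.inl`) and subsets of states
(`Sum.inr`). -/
abbrev Vtx (Q : Type*) := Q ⊕ Set Q

/-- The support of a set of vertices: the states belonging to it. -/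
def support {Q : Type*} (S : Set (Vtx Q)) : Set Q :=
  {q | Sum.inl q ∈ S}

/-- The graph `Γ₁(A)`: vertices are the states, and there is an edge
`(excl w, dupl w)` for each word `w` of defect 1. -/
def Gamma1 {Q σ : Type*} (δ : Q → σ → Q) : DGraph (Vtx Q) where
  verts := Set.range Sum.inl
  edge := fun u v => ∃ q p : Q, u = Sum.inl q ∧ v = Sum.inl p ∧
    ∃ w : List σ, defect δ w = 1 ∧ excl δ w = {q} ∧ p ∈ dupl δ w

/-- `Qnext G k`: the collection of the supports of all SCCs of `G` of rank
at least `k` (this is the set `Q_k` when `G = Γ_{k-1}(A)`). -/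
def Qnext {Q : Type*} (G : DGraph (Vtx Q)) (k : ℕ) : Set (Set Q) :=
  {C | ∃ v ∈ G.verts, C = support (scc G v) ∧ k ≤ C.ncard}

/-- One step of the iterative construction: from `G = Γ_{k-1}(A)` build
`Γ_k(A)` by adding the new vertices `Q_k`, the inclusion edges `I_k`, and the
edges `E_k` enforced by words of defect `k`. -/
def step {Q σ : Type*} (δ : Q → σ → Q) (G : DGraph (Vtx Q)) (k : ℕ) :
    DGraph (Vtx Q) where
  verts := G.verts ∪ Sum.inr '' Qnext G k
  edge := fun u v =>
    G.edge u v ∨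
    (∃ C ∈ Qnext G k, v = Sum.inr C ∧
      ((∃ q : Q, u = Sum.inl q ∧ q ∈ C) ∨
       (∃ D : Set Q, u = Sum.inr D ∧ Sum.inr D ∈ G.verts ∧ D ⊂ C))) ∨
    (∃ C ∈ Qnext G k, ∃ p : Q, u = Sum.inr C ∧ v = Sum.inl p ∧
      ∃ w : List σ, defect δ w = k ∧ excl δ w ⊆ C ∧ p ∈ dupl δ w)

/-- The layered graphs `Γ_k(A)` (with `Γ_0 := Γ_1`). -/
def Gamma {Q σ : Type*} (δ : Q → σ → Q) : ℕ → DGraph (Vtx Q)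
  | 0 => Gamma1 δ
  | 1 => Gamma1 δ
  | (k + 2) => step δ (Gamma δ (k + 1)) (k + 2)

/-- The FAILURE condition at step `k`: every SCC of `Γ_k(A)` has rank at
most `k`. -/
def failsAt {Q σ : Type*} (δ : Q → σ → Q) (k : ℕ) : Prop :=
  ∀ v ∈ (Gamma δ k).verts, (support (scc (Gamma δ k) v)).ncard ≤ k

/-- The iterative construction stops at step `k` (so `Γ(A) = Γ_k(A)`):
`k` is the first index at which `Γ_k(A)` is strongly connected (SUCCESS) or
every SCC of `Γ_k(A)` has rank at most `k` (FAILURE). -/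
def stopsAt {Q σ : Type*} (δ : Q → σ → Q) (k : ℕ) : Prop :=
  1 ≤ k ∧ (StronglyConnected (Gamma δ k) ∨ failsAt δ k) ∧
    ∀ j, 1 ≤ j → j < k → ¬ StronglyConnected (Gamma δ j) ∧ ¬ failsAt δ j


/-!
If `Γ_k(A)` is strongly connected and `∅ ≠ P ⊊ Q`, follow a path from a state outside `P` to a
state inside `P` and stop at the first edge entering a vertex that meets `P`. Either that edge
comes from a word `w` with `excl(w) ∩ P = ∅` and `dupl(w) ∩ P ≠ ∅`, so `P = P'·w` for the strictly
larger set `P' = w⁻¹P`; or it is an inclusion edge into an SCC of an earlier `Γ_j(A)` whose support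
meets both `P` and its complement, and we recurse into `Γ_j(A)`. Induction on `|Q \ P|` then
reaches every `P`.

Conversely, let `A` be completely reachable. By induction on `k`, as long as no earlier graph is
strongly connected, every sink SCC of `Γ_k(A)` has rank at least `k + 1` unless `Γ_k(A)` itself is
strongly connected. If its support `C` were a proper subset with `|C| ≤ k`, a sink SCC of
`Γ_{|C|-1}(A)` below it has rank `|C|` by induction, so `C ∈ Q_{|C|}`; a word `w` with
`excl(w) = C` then yields an edge from `C` to a state of `dupl(w)`, outside `C`: impossible for a
sink. Hence the construction cannot stop with FAILURE.
-/

open Set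

namespace DGraph

variable {V : Type*}

def IsSink (G : DGraph V) (v : V) : Prop :=
  ∀ x, GReach G v x → GReach G x v

variable {G : DGraph V}

lemma IsSink.mem_scc {v x : V} (hv : G.IsSink v) (hx : x ∈ G.verts) (hvx : GReach G v x) :
    x ∈ scc G v :=
  ⟨hx, hv x hvx, hvx⟩

lemma exists_edge_of_gReach {p : V → Prop} {u v : V} (h : GReach G u v) (hu : ¬ p u)
    (hv : p v) : ∃ x y, G.edge x y ∧ ¬ p x ∧ p y := by
  induction h with
  | refl => exact absurd hv hu
  | @tail y z _ hyz ih =>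
    by_cases hy : p y
    · exact ih hy
    · exact ⟨y, z, hyz, hy, hv⟩

lemma mem_verts_of_gReach (hG : ∀ u v, G.edge u v → v ∈ G.verts) {u v : V} (hu : u ∈ G.verts)
    (h : GReach G u v) : v ∈ G.verts := by
  induction h with
  | refl => exact hu
  | tail _ hyz _ => exact hG _ _ hyz

lemma exists_isSink [Finite V] (hG : ∀ u v, G.edge u v → v ∈ G.verts) {u : V}
    (hu : u ∈ G.verts) : ∃ v ∈ G.verts, GReach G u v ∧ G.IsSink v := by
  -- a vertex with the fewest reachable vertices reaches back everything it reaches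
  obtain ⟨v, ⟨hv, huv⟩, hmin⟩ := exists_min_image {x | x ∈ G.verts ∧ GReach G u x}
    (fun x => {y | GReach G x y}.ncard) (toFinite _) ⟨u, hu, .refl⟩
  refine ⟨v, hv, huv, fun x hvx => ?_⟩
  have hsame : {y | GReach G x y} = {y | GReach G v y} :=
    eq_of_subset_of_ncard_le (fun y hxy => hvx.trans hxy)
      (hmin x ⟨mem_verts_of_gReach hG hv hvx, huv.trans hvx⟩)
  have hvv : v ∈ {y | GReach G x y} := hsame ▸ Relation.ReflTransGen.refl
  exact hvv

end DGraph

section Words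

variable {Q σ : Type*} {δ : Q → σ → Q} {w : List σ} {P : Set Q}

lemma actSet_append (w₁ w₂ : List σ) (P : Set Q) :
    actSet δ (w₁ ++ w₂) P = actSet δ w₂ (actSet δ w₁ P) := by
  simp only [actSet, image_image]
  exact image_congr fun q _ => List.foldl_append

lemma mem_excl_iff {p : Q} : p ∈ excl δ w ↔ p ∉ range (actWord δ w) := by
  simp [excl, actSet]

lemma notMem_excl_of_mem_dupl {p : Q} (hp : p ∈ dupl δ w) : p ∉ excl δ w := by
  obtain ⟨q, -, -, hq, -⟩ := hp
  exact fun h => mem_excl_iff.mp h ⟨q, hq⟩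

lemma dupl_nonempty [Finite Q] (h : (excl δ w).Nonempty) : (dupl δ w).Nonempty := by
  obtain ⟨p, hp⟩ := h
  by_contra hd
  have hinj : Function.Injective (actWord δ w) := fun a b hab => by
    by_contra hne
    exact hd ⟨_, a, b, hne, rfl, hab.symm⟩
  exact mem_excl_iff.mp hp (Finite.injective_iff_surjective.mp hinj p)

lemma exists_excl_eq (hCR : completelyReachable δ) {E : Set Q} (hE : E ≠ univ) :
    ∃ w : List σ, excl δ w = E := by
  obtain ⟨w, hw⟩ := hCR Eᶜ (nonempty_compl.mpr hE)
  exact ⟨w, by rw [excl, hw, ← compl_eq_univ_sdiff, compl_compl]⟩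

/-- `w` maps the set `w⁻¹ P` onto `P` and is not injective on it. -/
def Expands (δ : Q → σ → Q) (w : List σ) (P : Set Q) : Prop :=
  Disjoint (excl δ w) P ∧ (dupl δ w ∩ P).Nonempty

lemma Expands.image_preimage (h : Expands δ w P) : actWord δ w '' (actWord δ w ⁻¹' P) = P := by
  rw [image_preimage_eq_inter_range, inter_eq_left]
  intro p hp
  by_contra hr
  exact disjoint_left.mp h.1 (mem_excl_iff.mpr hr) hp

lemma Expands.ncard_lt_ncard_preimage [Finite Q] (h : Expands δ w P) :
    P.ncard < (actWord δ w ⁻¹' P).ncard := by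
  obtain ⟨p, ⟨q₁, q₂, hne, h₁, h₂⟩, hp⟩ := h.2
  conv_lhs => rw [← h.image_preimage]
  refine (ncard_image_le (toFinite _)).lt_of_ne fun heq => hne ?_
  exact injOn_of_ncard_image_eq heq (toFinite _) (show actWord δ w q₁ ∈ P from h₁ ▸ hp)
    (show actWord δ w q₂ ∈ P from h₂ ▸ hp) (h₁.trans h₂.symm)

lemma completelyReachable_of_forall_expands [Finite Q]
    (h : ∀ P : Set Q, P.Nonempty → P ≠ univ → ∃ w, Expands δ w P) : completelyReachable δ := by
  intro P hP
  induction hn : Pᶜ.ncard using Nat.strong_induction_on generalizing P with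
  | _ n ih =>
  by_cases hPu : P = univ
  · exact ⟨[], by rw [hPu]; exact image_univ_of_surjective fun q => ⟨q, rfl⟩⟩
  obtain ⟨w, hw⟩ := h P hP hPu
  have hlt : (actWord δ w ⁻¹' P)ᶜ.ncard < n := by
    have := hw.ncard_lt_ncard_preimage
    have := ncard_add_ncard_compl P
    have := ncard_add_ncard_compl (actWord δ w ⁻¹' P)
    omega
  obtain ⟨p, ⟨q, -, -, hq, -⟩, hp⟩ := hw.2
  obtain ⟨w', hw'⟩ := ih _ hlt (actWord δ w ⁻¹' P) ⟨q, show actWord δ w q ∈ P from hq ▸ hp⟩ rfl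
  exact ⟨w' ++ w, by rw [actSet_append, hw', actSet, hw.image_preimage]⟩

end Words

section Layers

variable {Q σ : Type*} {δ : Q → σ → Q} {j k : ℕ} {C : Set Q}

def Vtx.toSet : Vtx Q → Set Q :=
  Sum.elim (fun q => {q}) id

lemma gamma_eq_step (hk : 2 ≤ k) : Gamma δ k = step δ (Gamma δ (k - 1)) k := by
  obtain ⟨k, rfl⟩ := Nat.exists_eq_add_of_le' hk
  rfl

lemma gamma_verts_mono : Monotone fun k => (Gamma δ k).verts :=
  monotone_nat_of_le_succ fun
    | 0 => le_rfl
    | _ + 1 => subset_union_left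

lemma gamma_edge_mono : Monotone fun k => (Gamma δ k).edge :=
  monotone_nat_of_le_succ fun
    | 0 => le_rfl
    | _ + 1 => fun _ _ => Or.inl

lemma gReach_gamma_mono (h : j ≤ k) {u v : Vtx Q} (huv : GReach (Gamma δ j) u v) :
    GReach (Gamma δ k) u v :=
  Relation.ReflTransGen.mono (gamma_edge_mono h) _ _ huv

lemma inl_mem_gamma_verts (k : ℕ) (q : Q) : Sum.inl q ∈ (Gamma δ k).verts :=
  gamma_verts_mono (Nat.zero_le k) ⟨q, rfl⟩

lemma inr_mem_gamma_verts (hj : 2 ≤ j) (hjk : j ≤ k) (hC : C ∈ Qnext (Gamma δ (j - 1)) j) :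
    Sum.inr C ∈ (Gamma δ k).verts :=
  gamma_verts_mono hjk <| show Sum.inr C ∈ (Gamma δ j).verts by
    rw [gamma_eq_step hj]; exact Or.inr ⟨C, hC, rfl⟩

lemma gamma_edge_inl_inr (hj : 2 ≤ j) (hjk : j ≤ k) (hC : C ∈ Qnext (Gamma δ (j - 1)) j)
    {q : Q} (hq : q ∈ C) : (Gamma δ k).edge (Sum.inl q) (Sum.inr C) :=
  gamma_edge_mono hjk _ _ <| show (Gamma δ j).edge _ _ by
    rw [gamma_eq_step hj]; exact Or.inr (Or.inl ⟨C, hC, rfl, Or.inl ⟨q, rfl, hq⟩⟩)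

lemma gamma_edge_inr_inl (hj : 2 ≤ j) (hjk : j ≤ k) (hC : C ∈ Qnext (Gamma δ (j - 1)) j)
    {w : List σ} (hw : defect δ w = j) (hwC : excl δ w ⊆ C) {p : Q} (hp : p ∈ dupl δ w) :
    (Gamma δ k).edge (Sum.inr C) (Sum.inl p) :=
  gamma_edge_mono hjk _ _ <| show (Gamma δ j).edge _ _ by
    rw [gamma_eq_step hj]; exact Or.inr (Or.inr ⟨C, hC, p, rfl, rfl, w, hw, hwC, hp⟩)

lemma le_ncard_of_mem_qnext {G : DGraph (Vtx Q)} (hC : C ∈ Qnext G j) : j ≤ C.ncard := by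
  obtain ⟨-, -, -, hjC⟩ := hC
  exact hjC

lemma nonempty_of_mem_qnext {G : DGraph (Vtx Q)} (hj : 1 ≤ j) (hC : C ∈ Qnext G j) :
    C.Nonempty :=
  nonempty_of_ncard_ne_zero (by have := le_ncard_of_mem_qnext hC; omega)

lemma mem_gamma_verts {v : Vtx Q} (hv : v ∈ (Gamma δ k).verts) :
    (∃ q, v = Sum.inl q) ∨
      ∃ j C, 2 ≤ j ∧ j ≤ k ∧ C ∈ Qnext (Gamma δ (j - 1)) j ∧ v = Sum.inr C := by
  induction k using Nat.twoStepInduction with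
  | zero | one => obtain ⟨q, rfl⟩ := hv; exact Or.inl ⟨q, rfl⟩
  | more k _ ih =>
    rcases hv with hv | ⟨C, hC, rfl⟩
    · exact (ih hv).imp id fun ⟨j, C, hj, hjk, h⟩ => ⟨j, C, hj, by omega, h⟩
    · exact Or.inr ⟨k + 2, C, le_add_self, le_rfl, hC, rfl⟩

lemma toSet_nonempty_of_mem_gamma_verts {v : Vtx Q} (hv : v ∈ (Gamma δ k).verts) :
    (Vtx.toSet v).Nonempty := by
  rcases mem_gamma_verts hv with ⟨q, rfl⟩ | ⟨j, C, hj, -, hC, rfl⟩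
  · exact singleton_nonempty q
  · exact nonempty_of_mem_qnext (by omega) hC

lemma gamma_edge_cases {u v : Vtx Q} (huv : (Gamma δ k).edge u v) :
    (∃ w p, excl δ w ⊆ Vtx.toSet u ∧ p ∈ dupl δ w ∧ v = Sum.inl p) ∨
      ∃ j C, 2 ≤ j ∧ j ≤ k ∧ C ∈ Qnext (Gamma δ (j - 1)) j ∧ v = Sum.inr C ∧
        (Vtx.toSet u).Nonempty ∧ Vtx.toSet u ⊆ C := by
  induction k using Nat.twoStepInduction with
  | zero | one =>
    obtain ⟨q, p, rfl, rfl, w, -, hw, hp⟩ := huv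
    exact Or.inl ⟨w, p, hw.le, hp, rfl⟩
  | more k _ ih =>
    rcases huv with huv | ⟨C, hC, rfl, ⟨q, rfl, hq⟩ | ⟨D, rfl, hD, hDC⟩⟩ |
      ⟨C, hC, p, rfl, rfl, w, -, hwC, hp⟩
    · exact (ih huv).imp id fun ⟨j, C, hj, hjk, h⟩ => ⟨j, C, hj, by omega, h⟩
    · exact Or.inr ⟨k + 2, C, le_add_self, le_rfl, hC, rfl, singleton_nonempty q,
        singleton_subset_iff.mpr hq⟩
    · exact Or.inr ⟨k + 2, C, le_add_self, le_rfl, hC, rfl,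
        toSet_nonempty_of_mem_gamma_verts hD, hDC.subset⟩
    · exact Or.inl ⟨w, p, hwC, hp, rfl⟩

lemma gamma_edge_target_mem_verts {u v : Vtx Q} (huv : (Gamma δ k).edge u v) :
    v ∈ (Gamma δ k).verts := by
  rcases gamma_edge_cases huv with ⟨w, p, -, -, rfl⟩ | ⟨j, C, hj, hjk, hC, rfl, -⟩
  · exact inl_mem_gamma_verts k p
  · exact inr_mem_gamma_verts hj hjk hC

lemma stronglyConnected_of_isSink_of_support_eq_univ {v : Vtx Q}
    (hv : (Gamma δ k).IsSink v) (hC : support (scc (Gamma δ k) v) = univ) :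
    StronglyConnected (Gamma δ k) := by
  have hstate (q : Q) : GReach (Gamma δ k) v (Sum.inl q) :=
    (show q ∈ support (scc (Gamma δ k) v) from hC ▸ mem_univ q).2.2
  have hreach (u) (hu : u ∈ (Gamma δ k).verts) : GReach (Gamma δ k) v u := by
    rcases mem_gamma_verts hu with ⟨q, rfl⟩ | ⟨j, C, hj, hjk, hC, rfl⟩
    · exact hstate q
    · obtain ⟨q, hq⟩ := nonempty_of_mem_qnext (by omega) hC
      exact (hstate q).tail (gamma_edge_inl_inr hj hjk hC hq)
  exact fun u hu u' hu' => (hv u (hreach u hu)).trans (hreach u' hu')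

end Layers

section Sufficiency

variable {Q σ : Type*} {δ : Q → σ → Q}

lemma exists_expands_of_gReach {k : ℕ} {P : Set Q} {q p : Q}
    (h : GReach (Gamma δ k) (Sum.inl q) (Sum.inl p)) (hq : q ∉ P) (hp : p ∈ P) :
    ∃ w, Expands δ w P := by
  induction k using Nat.strong_induction_on generalizing q p with
  | _ k ih =>
  -- the first edge of the path entering a vertex that meets `P`
  obtain ⟨a, c, hac, ha, hc⟩ := DGraph.exists_edge_of_gReach
    (p := fun v => ¬ Disjoint (Vtx.toSet v) P) h (by simpa [Vtx.toSet] using hq)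
    (by simpa [Vtx.toSet] using hp)
  rw [not_not] at ha
  rcases gamma_edge_cases hac with
    ⟨w, p', hw, hp', rfl⟩ | ⟨j, C, hj, hjk, hC, rfl, ⟨q', hq'⟩, haC⟩
  · exact ⟨w, ha.mono_left hw, p', hp', by simpa [Vtx.toSet] using hc⟩
  · obtain ⟨p', hp'C, hp'P⟩ := not_disjoint_iff.mp hc
    obtain ⟨v, -, rfl, -⟩ := hC
    exact ih (j - 1) (by omega) ((haC hq').2.1.trans hp'C.2.2) (disjoint_left.mp ha hq') hp'P

theorem completelyReachable_of_stronglyConnected [Finite Q] {k : ℕ}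
    (h : StronglyConnected (Gamma δ k)) : completelyReachable δ :=
  completelyReachable_of_forall_expands fun P ⟨p, hp⟩ hP => by
    obtain ⟨q, hq⟩ := (ne_univ_iff_exists_notMem P).mp hP
    exact exists_expands_of_gReach
      (h _ (inl_mem_gamma_verts k q) _ (inl_mem_gamma_verts k p)) hq hp

end Sufficiency

section Necessity

variable {Q σ : Type*} [Finite Q] {δ : Q → σ → Q} {k : ℕ}

lemma exists_mem_support_notMem (hCR : completelyReachable δ) {G : DGraph (Vtx Q)}
    (hG : ∀ q, Sum.inl q ∈ G.verts) {v u : Vtx Q} (hv : G.IsSink v) (hu : u ∈ scc G v)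
    {E : Set Q} (hE : E.Nonempty) (hEu : E ≠ univ)
    (hedge : ∀ w, excl δ w = E → ∀ p ∈ dupl δ w, G.edge u (Sum.inl p)) :
    ∃ p ∈ support (scc G v), p ∉ E := by
  obtain ⟨w, hw⟩ := exists_excl_eq hCR hEu
  obtain ⟨p, hp⟩ := dupl_nonempty (hw ▸ hE)
  exact ⟨p, hv.mem_scc (hG p) (hu.2.2.tail (hedge w hw p hp)), hw ▸ notMem_excl_of_mem_dupl hp⟩

lemma exists_isSink_gamma {u : Vtx Q} (hu : u ∈ (Gamma δ k).verts) :
    ∃ v ∈ (Gamma δ k).verts, GReach (Gamma δ k) u v ∧ (Gamma δ k).IsSink v :=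
  DGraph.exists_isSink (fun _ _ => gamma_edge_target_mem_verts) hu

lemma support_scc_nonempty_of_isSink (hCR : completelyReachable δ) {v : Vtx Q}
    (hv : v ∈ (Gamma δ k).verts) (hsink : (Gamma δ k).IsSink v)
    (hlev : ∀ j C, 2 ≤ j → j ≤ k → C ∈ Qnext (Gamma δ (j - 1)) j → j < Nat.card Q) :
    (support (scc (Gamma δ k) v)).Nonempty := by
  have hvv : v ∈ scc (Gamma δ k) v := ⟨hv, .refl, .refl⟩
  rcases mem_gamma_verts hv with ⟨q, rfl⟩ | ⟨j, C, hj, hjk, hC, rfl⟩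
  · exact ⟨q, hvv⟩
  obtain ⟨E, hEC, hEj⟩ := exists_subset_card_eq (le_ncard_of_mem_qnext hC)
  have hEu : E ≠ univ := fun h => by
    have := hlev j C hj hjk hC
    rw [h, ncard_univ] at hEj
    omega
  obtain ⟨p, hp, -⟩ := exists_mem_support_notMem hCR (inl_mem_gamma_verts k) hsink hvv
    (nonempty_of_ncard_ne_zero (by omega)) hEu fun w hw p hp =>
      gamma_edge_inr_inl hj hjk hC (by rw [defect, hw, hEj]) (hw ▸ hEC) hp
  exact ⟨p, hp⟩

lemma support_scc_mem_qnext {m : ℕ} (hmk : m ≤ k) {v : Vtx Q} (hsink : (Gamma δ k).IsSink v)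
    {q₀ : Q} (hq₀ : q₀ ∈ support (scc (Gamma δ k) v))
    (hC : (support (scc (Gamma δ k) v)).ncard = m + 1) {v' : Vtx Q}
    (hv' : v' ∈ (Gamma δ m).verts) (hq₀v' : GReach (Gamma δ m) (Sum.inl q₀) v')
    (hrank : m + 1 ≤ (support (scc (Gamma δ m) v')).ncard) :
    support (scc (Gamma δ k) v) ∈ Qnext (Gamma δ m) (m + 1) := by
  have hsub : support (scc (Gamma δ m) v') ⊆ support (scc (Gamma δ k) v) := fun x hx =>
    hsink.mem_scc (inl_mem_gamma_verts k x)
      (hq₀.2.2.trans (gReach_gamma_mono hmk (hq₀v'.trans hx.2.2)))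
  exact ⟨v', hv', (eq_of_subset_of_ncard_le hsub (by omega)).symm, hC.ge⟩

lemma support_scc_ne_singleton (hCR : completelyReachable δ) (hk : 1 ≤ k) {v : Vtx Q}
    (hsink : (Gamma δ k).IsSink v) {a : Q} (ha : {a} ≠ univ) :
    support (scc (Gamma δ k) v) ≠ {a} := by
  intro hC
  obtain ⟨p, hpC, hpa⟩ := exists_mem_support_notMem hCR (inl_mem_gamma_verts k) hsink
    (show a ∈ support (scc (Gamma δ k) v) from hC ▸ rfl) (singleton_nonempty a) ha
    fun w hw p hp => gamma_edge_mono hk _ _ ⟨a, p, rfl, rfl, w, by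
      rw [defect, hw, ncard_singleton], hw, hp⟩
  exact hpa (hC ▸ hpC)

lemma support_scc_notMem_qnext (hCR : completelyReachable δ) {v : Vtx Q}
    (hsink : (Gamma δ k).IsSink v) {j : ℕ} (hj : 2 ≤ j) (hjk : j ≤ k)
    (hCu : support (scc (Gamma δ k) v) ≠ univ) (hCj : (support (scc (Gamma δ k) v)).ncard = j) :
    support (scc (Gamma δ k) v) ∉ Qnext (Gamma δ (j - 1)) j := by
  set C := support (scc (Gamma δ k) v)
  intro hCq
  obtain ⟨q, hq⟩ := nonempty_of_mem_qnext (by omega) hCq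
  have hCv : Sum.inr C ∈ scc (Gamma δ k) v := hsink.mem_scc (inr_mem_gamma_verts hj hjk hCq)
    (hq.2.2.tail (gamma_edge_inl_inr hj hjk hCq hq))
  obtain ⟨p, hpC, hpC'⟩ := exists_mem_support_notMem hCR (inl_mem_gamma_verts k) hsink hCv
    ⟨q, hq⟩ hCu fun w hw p hp => gamma_edge_inr_inl hj hjk hCq (by rw [defect, hw, hCj]) hw.le hp
  exact hpC' hpC

lemma succ_le_rank_of_isSink (hCR : completelyReachable δ) (hk : 1 ≤ k)
    (hprev : ∀ j, 1 ≤ j → j < k → ¬ StronglyConnected (Gamma δ j))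
    {v : Vtx Q} (hv : v ∈ (Gamma δ k).verts) (hsink : (Gamma δ k).IsSink v) :
    k + 1 ≤ (support (scc (Gamma δ k) v)).ncard ∨ StronglyConnected (Gamma δ k) := by
  induction k using Nat.strong_induction_on generalizing v with
  | _ k ih =>
  set C := support (scc (Gamma δ k) v)
  by_cases hCu : C = univ
  · exact Or.inr (stronglyConnected_of_isSink_of_support_eq_univ hsink hCu)
  refine Or.inl (not_lt.mp fun hCk => ?_)
  have below (m) (hm : 1 ≤ m) (hmk : m < k) (q : Q) : ∃ v' ∈ (Gamma δ m).verts,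
      GReach (Gamma δ m) (Sum.inl q) v' ∧ (Gamma δ m).IsSink v' ∧
        m + 1 ≤ (support (scc (Gamma δ m) v')).ncard := by
    obtain ⟨v', hv', hqv', hsink'⟩ := exists_isSink_gamma (inl_mem_gamma_verts (δ := δ) m q)
    exact ⟨v', hv', hqv', hsink', (ih m hmk hm (fun j hj hjm => hprev j hj (by omega)) hv'
      hsink').resolve_right (hprev m hm hmk)⟩
  -- otherwise `Γ_{|Q|-1}(A)` would have a sink SCC of full rank, hence be strongly connected
  have hlev (j C) (hj : 2 ≤ j) (hjk : j ≤ k) (hC : C ∈ Qnext (Gamma δ (j - 1)) j) :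
      j < Nat.card Q := by
    by_contra! hQj
    obtain ⟨q, -⟩ := nonempty_of_mem_qnext (by omega) hC
    have := (le_ncard_of_mem_qnext hC).trans (ncard_le_card C)
    obtain ⟨v', -, -, hsink', hrank⟩ := below (Nat.card Q - 1) (by omega) (by omega) q
    refine hprev (Nat.card Q - 1) (by omega) (by omega)
      (stronglyConnected_of_isSink_of_support_eq_univ hsink' ?_)
    exact eq_of_subset_of_ncard_le (subset_univ _) (by rw [ncard_univ]; omega)
  obtain ⟨q₀, hq₀⟩ := support_scc_nonempty_of_isSink hCR hv hsink hlev
  obtain ⟨m, hm⟩ : ∃ m, C.ncard = m + 1 :=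
    ⟨C.ncard - 1, by have := (ncard_pos (toFinite C)).mpr ⟨q₀, hq₀⟩; omega⟩
  rcases m.eq_zero_or_pos with rfl | hm0
  · obtain ⟨a, ha⟩ := ncard_eq_one.mp hm
    exact support_scc_ne_singleton hCR hk hsink (ha ▸ hCu) ha
  · obtain ⟨v', hv', hq₀v', -, hrank⟩ := below m hm0 (by omega) q₀
    exact support_scc_notMem_qnext hCR hsink (by omega) (by omega) hCu hm
      (support_scc_mem_qnext (by omega) hsink hq₀ hm hv' hq₀v' hrank)

end Necessity

section Stopping

variable {Q σ : Type*} [Finite Q] (δ : Q → σ → Q)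

lemma failsAt_of_card_le {k : ℕ} (hk : Nat.card Q ≤ k) : failsAt δ k :=
  fun _ _ => (ncard_le_card _).trans hk

lemma exists_stopsAt : ∃ k, stopsAt δ k := by
  classical
  have hstop : ∃ k, 1 ≤ k ∧ (StronglyConnected (Gamma δ k) ∨ failsAt δ k) :=
    ⟨Nat.card Q + 1, by omega, Or.inr (failsAt_of_card_le δ (by omega))⟩
  refine ⟨Nat.find hstop, (Nat.find_spec hstop).1, (Nat.find_spec hstop).2, fun j hj hjk => ?_⟩
  have := Nat.find_min hstop hjk
  exact ⟨fun h => this ⟨hj, Or.inl h⟩, fun h => this ⟨hj, Or.inr h⟩⟩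

variable {δ}

lemma stronglyConnected_of_stopsAt (hCR : completelyReachable δ) {k : ℕ} (hk : stopsAt δ k) :
    StronglyConnected (Gamma δ k) := by
  obtain ⟨hk1, hsc | hfail, hprev⟩ := hk
  · exact hsc
  rcases (Gamma δ k).verts.eq_empty_or_nonempty with hempty | ⟨u, hu⟩
  · exact fun u hu => absurd hu (hempty ▸ notMem_empty u)
  obtain ⟨v, hv, -, hsink⟩ := exists_isSink_gamma hu
  refine (succ_le_rank_of_isSink hCR hk1 (fun j hj hjk => (hprev j hj hjk).1) hv
    hsink).resolve_left ?_
  have := hfail v hv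
  omega

end Stopping

/-- Theorem 5, the main result: a DFA `A` is completely
reachable if and only if the iteratively constructed graph `Γ(A)` (the graph
`Γ_k(A)` at the step `k` where the construction stops) is strongly connected. -/
theorem completelyReachable_iff_gamma_strongly_connected
    {Q σ : Type*} [Fintype Q] (δ : Q → σ → Q) :
    completelyReachable δ ↔
      ∃ k : ℕ, stopsAt δ k ∧ StronglyConnected (Gamma δ k) := by
  refine ⟨fun hCR => ?_, fun ⟨_, _, hk⟩ => completelyReachable_of_stronglyConnected hk⟩
  obtain ⟨k, hk⟩ := exists_stopsAt δ
  exact ⟨k, hk, stronglyConnected_of_stopsAt hCR hk⟩
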